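/- Let X be a discrete random variable, J a discrete random variable that is a function of X taking values in a finite set of size K^n, and X̂ a function of J. If the distortion achieved, D* = E[d(X,X̂)], equals the value of the rate–distortion function D_X(R) at R = n·log K, and D_X is strictly decreasing at R, then H(J) = n·log K, i.e., J is maximum-entropy (uniform) over its K^n-element alphabet. -/

import Mathlib

open Real

noncomputable section

/-- `p` is a probability mass function on the finite type `α`. -/
def IsPMF {α : Type*} [Fintype α] (p : α → ℝ) : Prop :=
  (∀ a, 0 ≤ p a) ∧ ∑ a, p a = 1

/-- Shannon entropy (base 2) of a pmf on a finite type. -/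
def ent {α : Type*} [Fintype α] (p : α → ℝ) : ℝ :=
  -∑ a, p a * Real.logb 2 (p a)

/-- `W` is a conditional distribution (channel/kernel) from `α` to `β`. -/
def IsKernel {α β : Type*} [Fintype β] (W : α → β → ℝ) : Prop :=
  (∀ a b, 0 ≤ W a b) ∧ ∀ a, ∑ b, W a b = 1

/-- First marginal of a joint pmf. -/
def margFst {α β : Type*} [Fintype β] (j : α × β → ℝ) : α → ℝ :=
  fun a => ∑ b, j (a, b)

/-- Second marginal of a joint pmf. -/
def margSnd {α β : Type*} [Fintype α] (j : α × β → ℝ) : β → ℝ :=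
  fun b => ∑ a, j (a, b)

/-- Mutual information (base 2) of a joint pmf on `α × β`. -/
def mutInf {α β : Type*} [Fintype α] [Fintype β] (j : α × β → ℝ) : ℝ :=
  ∑ x, j x * Real.logb 2 (j x / (margFst j x.1 * margSnd j x.2))

/-- Rate–distortion function of the source `p` with distortion `d`:
infimum of expected distortion over channels with mutual information at most `R`. -/
def RD {α β : Type*} [Fintype α] [Fintype β] (p : α → ℝ) (d : α → β → ℝ) (R : ℝ) : ℝ :=
  sInf {D | ∃ W : α → β → ℝ, IsKernel W ∧
    mutInf (fun x : α × β => p x.1 * W x.1 x.2) ≤ R ∧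
    D = ∑ a, ∑ b, p a * W a b * d a b}

/-- Pushforward pmf of `p` under the map `f` (the law of `f(X)`). -/
def push {α γ : Type*} [Fintype α] [DecidableEq γ] (p : α → ℝ) (f : α → γ) : γ → ℝ :=
  fun c => ∑ a, if f a = c then p a else 0


/-! Always `H(J) ≤ log₂ Kⁿ`. If the inequality were strict, the code `a ↦ g (f a)`, used as a
deterministic channel, would have mutual information `H(g(J)) ≤ H(J) < n log₂ K` and distortion
`D* = D_X(n log₂ K)`; hence `D_X(H(J)) ≤ D_X(n log₂ K)`, contradicting strict decrease of `D_X`. -/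

section Entropy

variable {α : Type*} [Fintype α]

lemma IsPMF.le_one {p : α → ℝ} (hp : IsPMF p) (a : α) : p a ≤ 1 :=
  hp.2 ▸ Finset.single_le_sum (fun a' _ => hp.1 a') (Finset.mem_univ a)

lemma ent_eq_sum_negMulLog_div (p : α → ℝ) :
    ent p = (∑ a, Real.negMulLog (p a)) / Real.log 2 := by
  simp only [ent, Real.logb, Real.negMulLog, Finset.sum_div, ← Finset.sum_neg_distrib]
  exact Finset.sum_congr rfl fun a _ => by ring

lemma ent_nonneg {p : α → ℝ} (hp : IsPMF p) : 0 ≤ ent p := by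
  rw [ent_eq_sum_negMulLog_div]
  exact div_nonneg (Finset.sum_nonneg fun a _ => Real.negMulLog_nonneg (hp.1 a) (hp.le_one a))
    (Real.log_nonneg one_le_two)

lemma sum_negMulLog_le_log_card {p : α → ℝ} (hp : IsPMF p) :
    ∑ a, Real.negMulLog (p a) ≤ Real.log (Fintype.card α) := by
  have hN : (0 : ℝ) < Fintype.card α := by
    have : Nonempty α := by
      by_contra h
      simpa [not_nonempty_iff.mp h] using hp.2
    exact_mod_cast Fintype.card_pos
  set N : ℝ := (Fintype.card α : ℝ)
  -- Jensen for the concave `negMulLog` with uniform weights `1 / card α`.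
  have hJensen := Real.concaveOn_negMulLog.le_map_sum (t := Finset.univ) (w := fun _ => N⁻¹)
    (p := p) (fun _ _ => by positivity) (by simp [N, hN.ne']) (fun a _ => hp.1 a)
  simp only [smul_eq_mul, ← Finset.mul_sum, hp.2, mul_one] at hJensen
  rw [Real.negMulLog, Real.log_inv, neg_mul_neg] at hJensen
  exact le_of_mul_le_mul_left hJensen (inv_pos.2 hN)

lemma ent_le_logb_card {p : α → ℝ} (hp : IsPMF p) : ent p ≤ Real.logb 2 (Fintype.card α) := by
  rw [ent_eq_sum_negMulLog_div, Real.logb]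
  exact div_le_div_of_nonneg_right (sum_negMulLog_le_log_card hp) (Real.log_nonneg one_le_two)

end Entropy

section Push

variable {α β γ : Type*} [Fintype α] [DecidableEq β] [DecidableEq γ]

lemma sum_push_mul [Fintype γ] (p : α → ℝ) (f : α → γ) (L : γ → ℝ) :
    ∑ c, push p f c * L c = ∑ a, p a * L (f a) := by
  simp only [push, Finset.sum_mul, ite_mul, zero_mul]
  rw [Finset.sum_comm]
  simp

lemma push_isPMF [Fintype γ] {p : α → ℝ} (hp : IsPMF p) (f : α → γ) : IsPMF (push p f) :=
  ⟨fun _ => Finset.sum_nonneg fun a _ => by split <;> simp [hp.1 a],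
    by simpa [hp.2] using sum_push_mul p f (fun _ => 1)⟩

lemma le_push {p : α → ℝ} (hp : ∀ a, 0 ≤ p a) (f : α → γ) (a : α) : p a ≤ push p f (f a) := by
  simpa [push] using Finset.single_le_sum (f := fun a' => if f a' = f a then p a' else 0)
    (fun a' _ => by split <;> simp [hp a']) (Finset.mem_univ a)

lemma push_push [Fintype γ] (p : α → ℝ) (f : α → γ) (g : γ → β) :
    push (push p f) g = push p (g ∘ f) := by
  ext b
  have h := sum_push_mul p f (fun c => if g c = b then (1 : ℝ) else 0)
  simp only [mul_ite, mul_one, mul_zero] at h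
  exact h

lemma ent_push [Fintype γ] (p : α → ℝ) (f : α → γ) :
    ent (push p f) = -∑ a, p a * Real.logb 2 (push p f (f a)) := by
  rw [ent, sum_push_mul p f (fun c => Real.logb 2 (push p f c))]

lemma ent_push_le [Fintype γ] {q : α → ℝ} (hq : ∀ a, 0 ≤ q a) (g : α → γ) :
    ent (push q g) ≤ ent q := by
  rw [ent_push, ent, neg_le_neg_iff]
  refine Finset.sum_le_sum fun a _ => ?_
  rcases (hq a).eq_or_lt with h0 | hpos
  · simp [← h0]
  · exact mul_le_mul_of_nonneg_left
      (Real.logb_le_logb_of_le one_lt_two hpos (le_push hq g a)) hpos.le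

end Push

section Deterministic

variable {α β : Type*} [Fintype β] [DecidableEq β]

def detKernel (h : α → β) : α → β → ℝ := fun a b => if b = h a then 1 else 0

lemma detKernel_isKernel (h : α → β) : IsKernel (detKernel h) :=
  ⟨fun a b => by unfold detKernel; split <;> norm_num, fun a => by simp [detKernel]⟩

variable [Fintype α]

lemma mutInf_detKernel (p : α → ℝ) (h : α → β) :
    mutInf (fun x : α × β => p x.1 * detKernel h x.1 x.2) = ent (push p h) := by
  set j : α × β → ℝ := fun x => p x.1 * detKernel h x.1 x.2
  have hfst : margFst j = p := funext fun a => by simp [j, margFst, detKernel]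
  have hsnd : margSnd j = push p h := funext fun b => by
    simp only [j, margSnd, push, detKernel, mul_ite, mul_one, mul_zero]
    exact Finset.sum_congr rfl fun a _ => by simp only [eq_comm]
  rw [mutInf, Fintype.sum_prod_type, ent_push, ← Finset.sum_neg_distrib]
  refine Finset.sum_congr rfl fun a _ => ?_
  rw [Finset.sum_eq_single (h a) (fun b _ hb => by simp [j, detKernel, hb]) (by simp)]
  simp only [hfst, hsnd]
  simp only [j, detKernel, if_pos, mul_one]
  rcases eq_or_ne (p a) 0 with h0 | h0
  · simp [h0]
  · rw [div_mul_cancel_left₀ h0, Real.logb_inv, mul_neg]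

lemma RD_le_of_deterministic {p : α → ℝ} (hp : ∀ a, 0 ≤ p a) {d : α → β → ℝ}
    (hd : ∀ a b, 0 ≤ d a b) (h : α → β) {R : ℝ} (hR : ent (push p h) ≤ R) :
    RD p d R ≤ ∑ a, p a * d a (h a) := by
  refine csInf_le ⟨0, ?_⟩ ⟨detKernel h, detKernel_isKernel h, (mutInf_detKernel p h).le.trans hR, ?_⟩
  · rintro D ⟨W, hW, -, rfl⟩
    exact Finset.sum_nonneg fun a _ => Finset.sum_nonneg fun b _ =>
      mul_nonneg (mul_nonneg (hp a) (hW.1 a b)) (hd a b)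
  · refine Finset.sum_congr rfl fun a _ => ?_
    simp [detKernel, mul_ite, ite_mul]

end Deterministic

theorem stmt0_general {α β : Type*} [Fintype α] [Fintype β]
    (p : α → ℝ) (hp : IsPMF p) (d : α → β → ℝ) (hd : ∀ a b, 0 ≤ d a b)
    (K n : ℕ)
    (f : α → Fin (K ^ n)) (g : Fin (K ^ n) → β)
    (hopt : ∑ a, p a * d a (g (f a)) = RD p d (n * Real.logb 2 K))
    (hdec : ∀ R' : ℝ, 0 ≤ R' → R' < n * Real.logb 2 K →
      RD p d (n * Real.logb 2 K) < RD p d R') :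
    ent (push p f) = n * Real.logb 2 K := by
  classical
  have hJ := push_isPMF hp f
  have hle : ent (push p f) ≤ n * Real.logb 2 K := by
    simpa [Real.logb_pow] using ent_le_logb_card hJ
  refine hle.eq_or_lt.resolve_right fun hlt => ?_
  have hrate : ent (push p (g ∘ f)) ≤ ent (push p f) :=
    push_push p f g ▸ ent_push_le hJ.1 g
  have hcode := RD_le_of_deterministic hp.1 hd (g ∘ f) hrate
  exact (hdec _ (ent_nonneg hJ) hlt).not_ge (hopt ▸ hcode)

/-- if a deterministic quantizer `J = f(X)` with `K^n` possible values and
reconstruction `X̂ = g(J)` achieves distortion equal to the rate–distortion function at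
`R = n·log₂ K`, and the rate–distortion function is strictly decreasing at `R`, then
`H(J) = n·log₂ K`, i.e. `J` is maximum-entropy over its `K^n`-element alphabet. -/
theorem stmt0 {α β : Type*} [Fintype α] [Fintype β] [Nonempty β]
    (p : α → ℝ) (hp : IsPMF p) (d : α → β → ℝ) (hd : ∀ a b, 0 ≤ d a b)
    (K n : ℕ) (hK : 2 ≤ K) (hn : 1 ≤ n)
    (f : α → Fin (K ^ n)) (g : Fin (K ^ n) → β)
    (hopt : ∑ a, p a * d a (g (f a)) = RD p d (n * Real.logb 2 K))
    (hdec : ∀ R' : ℝ, 0 ≤ R' → R' < n * Real.logb 2 K →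
      RD p d (n * Real.logb 2 K) < RD p d R') :
    ent (push p f) = n * Real.logb 2 K :=
  stmt0_general p hp d hd K n f g hopt hdec
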